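/- (Theorem 3.4, prediction error bound.) Let A, Â ∈ ℂ^{n×n} be Hermitian matrices, τ > 0, and C ≥ 0 a constant such that ‖(A − Â) v‖₂ ≤ C ‖v‖₂ for all v ∈ ℂⁿ. Let (b_k)_{k≥0} be vectors in ℂⁿ, and let sequences (u_k)_{k≥0}, (x_k)_{k≥0} in ℂⁿ satisfy i (u_{k+1} − u_k)/τ = Â ((u_{k+1} + u_k)/2) + b_k for all k ≥ 0, x_{k+1} = (I + i(τ/2)A)⁻¹ (I − i(τ/2)A) x_k for all k ≥ 0, and x_0 = u_0. Then for every k ≥ 1, ‖u_k − x_k‖₂ ≤ τ ( Σ_{j=0}^{k−1} ‖b_j‖₂ + k · C · ‖u_0‖₂ ). -/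

import Mathlib

/-!
A Crank–Nicolson step `w + c T w = e - c T e + r`, with `T` symmetric and `c` purely imaginary,
satisfies `‖w‖ ≤ ‖e‖ + ‖r‖`: indeed `‖w‖² - ‖e‖² = Re ⟪w - e, w + e⟫` and `w - e = r - c T (w + e)`,
while `Re ⟪c T z, z⟫ = 0`. For `r = 0` this says that the Cayley transform is an isometry, so
`‖x k‖ = ‖u 0‖`. The error `u k - x k` takes a step of the scheme for `Â` with remainder
`-iτ b k + c (A - Â) (x k + x (k + 1))`, of norm at most `τ ‖b k‖ + τ C ‖u 0‖`, and the bound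
follows by summing the one-step estimates.
-/

open Matrix

/-- The Euclidean (2-)norm of a vector in `ℂⁿ`: `‖x‖₂ = (∑ k |x_k|²)^{1/2}`. -/
noncomputable def euclNorm {n : ℕ} (v : Fin n → ℂ) : ℝ :=
  Real.sqrt (∑ k, ‖v k‖ ^ 2)

open Finset WithLp

theorem le_add_sum_of_succ_le_add {α : Type*} [AddCommMonoid α] [PartialOrder α]
    [IsOrderedAddMonoid α] {a d : ℕ → α} (h : ∀ k, a (k + 1) ≤ a k + d k) (k : ℕ) :
    a k ≤ a 0 + ∑ j ∈ range k, d j := by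
  induction k with
  | zero => simp
  | succ k ih => calc
      a (k + 1) ≤ a k + d k := h k
      _ ≤ a 0 + ∑ j ∈ range k, d j + d k := by gcongr
      _ = a 0 + ∑ j ∈ range (k + 1), d j := by rw [sum_range_succ, add_assoc]

namespace LinearMap.IsSymmetric

variable {E : Type*} [NormedAddCommGroup E] [InnerProductSpace ℂ E] {T : E →ₗ[ℂ] E} {c : ℂ}

theorem re_inner_smul_apply_self (hT : T.IsSymmetric) (hc : c.re = 0) (v : E) :
    (inner ℂ (c • T v) v).re = 0 := by
  have him : (inner ℂ (T v) v).im = 0 :=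
    Complex.conj_eq_iff_im.mp (hT.conj_inner_sym v v)
  rw [inner_smul_left, Complex.mul_re, Complex.conj_re, Complex.conj_im, hc, him]
  ring

theorem norm_le_of_crankNicolson_step (hT : T.IsSymmetric) (hc : c.re = 0) {w e r : E}
    (h : w + c • T w = e - c • T e + r) : ‖w‖ ≤ ‖e‖ + ‖r‖ := by
  have hdiff : w - e = r - c • T (w + e) := by
    rw [map_add, smul_add]
    linear_combination (norm := module) h
  have hsq : ‖w‖ ^ 2 - ‖e‖ ^ 2 ≤ ‖r‖ * (‖w‖ + ‖e‖) := calc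
    ‖w‖ ^ 2 - ‖e‖ ^ 2 = (inner ℂ (w - e) (w + e)).re := by
        rw [inner_sub_left, inner_add_right, inner_add_right, Complex.sub_re, Complex.add_re,
          Complex.add_re]
        simp only [← RCLike.re_to_complex, ← norm_sq_eq_re_inner (𝕜 := ℂ),
          inner_re_symm (𝕜 := ℂ) w e]
        ring
    _ = (inner ℂ r (w + e)).re := by
        rw [hdiff, inner_sub_left, Complex.sub_re, hT.re_inner_smul_apply_self hc, sub_zero]
    _ ≤ ‖r‖ * ‖w + e‖ := re_inner_le_norm (𝕜 := ℂ) _ _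
    _ ≤ ‖r‖ * (‖w‖ + ‖e‖) := by gcongr; exact norm_add_le _ _
  nlinarith [norm_nonneg w, norm_nonneg e, norm_nonneg r]

theorem norm_eq_of_crankNicolson_step (hT : T.IsSymmetric) (hc : c.re = 0) {w e : E}
    (h : w + c • T w = e - c • T e) : ‖w‖ = ‖e‖ := by
  have hwe := hT.norm_le_of_crankNicolson_step hc (r := 0) (by rw [h, add_zero])
  have hew := hT.norm_le_of_crankNicolson_step (c := -c) (by simp [hc]) (w := e) (e := w)
    (r := 0) (by linear_combination (norm := module) -h)
  simp only [norm_zero, add_zero] at hwe hew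
  exact le_antisymm hwe hew

theorem norm_le_norm_add_smul_apply (hT : T.IsSymmetric) (hc : c.re = 0) (v : E) :
    ‖v‖ ≤ ‖v + c • T v‖ := by
  simpa using hT.norm_le_of_crankNicolson_step hc (e := 0) (by simp)

end LinearMap.IsSymmetric

section CrankNicolson

variable {E : Type*} [NormedAddCommGroup E] [InnerProductSpace ℂ E] {c : ℂ}

theorem norm_sub_le_of_crankNicolson {T S : E →ₗ[ℂ] E} (hT : T.IsSymmetric)
    (hS : S.IsSymmetric) (hc : c.re = 0) {C : ℝ} (hTS : ∀ v, ‖(T - S) v‖ ≤ C * ‖v‖)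
    {u x β : ℕ → E} (hu : ∀ k, u (k + 1) + c • S (u (k + 1)) = u k - c • S (u k) + β k)
    (hx : ∀ k, x (k + 1) + c • T (x (k + 1)) = x k - c • T (x k)) (h0 : x 0 = u 0) (k : ℕ) :
    ‖u k - x k‖ ≤ ∑ j ∈ range k, ‖β j‖ + k * (2 * ‖c‖ * C * ‖u 0‖) := by
  have hx_norm : ∀ k, ‖x k‖ = ‖u 0‖ := by
    intro k
    induction k with
    | zero => rw [h0]
    | succ k ih => rw [hT.norm_eq_of_crankNicolson_step hc (hx k), ih]
  have hstep : ∀ k, ‖u (k + 1) - x (k + 1)‖ ≤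
      ‖u k - x k‖ + (‖β k‖ + 2 * ‖c‖ * C * ‖u 0‖) := by
    intro k
    have herr : (u (k + 1) - x (k + 1)) + c • S (u (k + 1) - x (k + 1)) =
        (u k - x k) - c • S (u k - x k) + (β k + c • ((T - S) (x k) + (T - S) (x (k + 1)))) := by
      simp only [map_sub, LinearMap.sub_apply, smul_sub, smul_add]
      linear_combination (norm := module) hu k - hx k
    have hdefect : ‖c • ((T - S) (x k) + (T - S) (x (k + 1)))‖ ≤ 2 * ‖c‖ * C * ‖u 0‖ := calc
      _ ≤ ‖c‖ * (‖(T - S) (x k)‖ + ‖(T - S) (x (k + 1))‖) := by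
          rw [norm_smul]; gcongr; exact norm_add_le _ _
      _ ≤ ‖c‖ * (C * ‖x k‖ + C * ‖x (k + 1)‖) := by gcongr <;> exact hTS _
      _ = 2 * ‖c‖ * C * ‖u 0‖ := by rw [hx_norm, hx_norm]; ring
    linarith [hS.norm_le_of_crankNicolson_step hc herr, norm_add_le (β k)
      (c • ((T - S) (x k) + (T - S) (x (k + 1))))]
  simpa [h0, sum_add_distrib] using
    le_add_sum_of_succ_le_add (a := fun k ↦ ‖u k - x k‖) hstep k

end CrankNicolson

section Matrix

variable {ι : Type*} [Fintype ι] {M : Matrix ι ι ℂ} {c : ℂ}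

theorem Matrix.IsHermitian.isUnit_one_add_smul [DecidableEq ι] (hM : M.IsHermitian)
    (hc : c.re = 0) : IsUnit (1 + c • M) := by
  rw [← mulVec_injective_iff_isUnit]
  intro v w hvw
  have hzero : (1 + c • M) *ᵥ (v - w) = 0 := by rw [mulVec_sub, hvw, sub_self]
  rw [add_mulVec, one_mulVec, smul_mulVec] at hzero
  have hle := (isSymmetric_toEuclideanLin_iff.mpr hM).norm_le_norm_add_smul_apply hc
    (toLp 2 (v - w))
  rwa [toLpLin_toLp, ← toLp_smul, ← toLp_add, toLin'_apply, hzero, toLp_zero, norm_zero,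
    norm_le_zero_iff, toLp_eq_zero, sub_eq_zero] at hle

theorem Matrix.IsHermitian.crankNicolson_step_of_eq_cayley_mulVec [DecidableEq ι]
    (hM : M.IsHermitian) (hc : c.re = 0) {x y : ι → ℂ}
    (h : y = ((1 + c • M)⁻¹ * (1 - c • M)) *ᵥ x) :
    y + c • (M *ᵥ y) = x - c • (M *ᵥ x) := by
  have hdet := (isUnit_iff_isUnit_det _).mp (hM.isUnit_one_add_smul hc)
  have hP : (1 + c • M) *ᵥ y = (1 - c • M) *ᵥ x := by
    rw [h, mulVec_mulVec, ← Matrix.mul_assoc, mul_nonsing_inv _ hdet, Matrix.one_mul]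
  simpa only [add_mulVec, sub_mulVec, one_mulVec, smul_mulVec] using hP

theorem crankNicolson_step_of_midpoint {τ : ℂ} (hτ : τ ≠ 0) {v w b : ι → ℂ}
    (h : (Complex.I / τ) • (w - v) = M *ᵥ ((2 : ℂ)⁻¹ • (w + v)) + b) :
    w + (Complex.I * (τ / 2)) • (M *ᵥ w) =
      v - (Complex.I * (τ / 2)) • (M *ᵥ v) + (-(Complex.I * τ)) • b := by
  rw [mulVec_smul, mulVec_add] at h
  have h' := congrArg ((-(Complex.I * τ)) • ·) h
  simp only [smul_add, smul_sub, smul_smul] at h'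
  have e1 : -(Complex.I * τ) * (Complex.I / τ) = 1 := by
    field_simp
    linear_combination (-1 : ℂ) * Complex.I_sq
  have e2 : -(Complex.I * τ) * (2 : ℂ)⁻¹ = -(Complex.I * (τ / 2)) := by ring
  rw [e1, e2, one_smul] at h'
  linear_combination (norm := module) h'

end Matrix

theorem euclNorm_eq_norm_toLp {n : ℕ} (v : Fin n → ℂ) : euclNorm v = ‖toLp 2 v‖ := by
  rw [EuclideanSpace.norm_eq]; rfl

theorem cnDMD_prediction_error_bound_general (n : ℕ) (A Ahat : Matrix (Fin n) (Fin n) ℂ)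
    (hA : A.IsHermitian) (hAhat : Ahat.IsHermitian) (τ : ℝ) (hτ : 0 < τ)
    (C : ℝ)
    (hbound : ∀ v : Fin n → ℂ, euclNorm ((A - Ahat).mulVec v) ≤ C * euclNorm v)
    (b : ℕ → Fin n → ℂ) (u x : ℕ → Fin n → ℂ)
    (hu : ∀ k : ℕ, (Complex.I / (τ : ℂ)) • (u (k + 1) - u k) =
      Ahat.mulVec ((2 : ℂ)⁻¹ • (u (k + 1) + u k)) + b k)
    (hx : ∀ k : ℕ, x (k + 1) =
      ((1 + (Complex.I * ((τ : ℂ) / 2)) • A)⁻¹ *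
          (1 - (Complex.I * ((τ : ℂ) / 2)) • A)).mulVec (x k))
    (h0 : x 0 = u 0) :
    ∀ k : ℕ, 1 ≤ k → euclNorm (u k - x k) ≤
      τ * ((∑ j ∈ Finset.range k, euclNorm (b j)) + (k : ℝ) * C * euclNorm (u 0)) := by
  intro k _
  set c : ℂ := Complex.I * ((τ : ℂ) / 2)
  have hc : c.re = 0 := by simp [c]
  have hτ_norm : ‖-(Complex.I * τ)‖ = τ := by simp [hτ.le]
  have hc_norm : 2 * ‖c‖ = τ := by simp [c, abs_of_pos hτ]; ring
  have herr := norm_sub_le_of_crankNicolson (isSymmetric_toEuclideanLin_iff.mpr hA)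
    (isSymmetric_toEuclideanLin_iff.mpr hAhat) hc (C := C)
    (u := fun k ↦ toLp 2 (u k)) (x := fun k ↦ toLp 2 (x k))
    (β := fun k ↦ toLp 2 ((-(Complex.I * τ)) • b k))
    (fun v ↦ by simpa [euclNorm_eq_norm_toLp, toLpLin_apply, sub_mulVec] using hbound (ofLp v))
    (fun k ↦ by
      simpa using congrArg (toLp 2) (crankNicolson_step_of_midpoint (by simpa using hτ.ne') (hu k)))
    (fun k ↦ by
      simpa using congrArg (toLp 2) (hA.crankNicolson_step_of_eq_cayley_mulVec hc (hx k)))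
    (by simp [h0]) k
  simp only [euclNorm_eq_norm_toLp, toLp_sub, toLp_smul, norm_smul, hτ_norm, hc_norm] at herr ⊢
  rw [← Finset.mul_sum] at herr
  linarith

/-- **Theorem 3.4, prediction error bound.** Let `A, Â ∈ ℂ^{n×n}` be Hermitian,
`τ > 0`, and `C ≥ 0` with `‖(A − Â) v‖₂ ≤ C ‖v‖₂` for all `v`.  If
`i (u_{k+1} − u_k)/τ = Â ((u_{k+1} + u_k)/2) + b_k`,
`x_{k+1} = (I + i(τ/2)A)⁻¹ (I − i(τ/2)A) x_k`, and `x_0 = u_0`, then for every `k ≥ 1`,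
`‖u_k − x_k‖₂ ≤ τ (∑_{j=0}^{k−1} ‖b_j‖₂ + k C ‖u_0‖₂)`. -/
theorem cnDMD_prediction_error_bound (n : ℕ) (A Ahat : Matrix (Fin n) (Fin n) ℂ)
    (hA : A.IsHermitian) (hAhat : Ahat.IsHermitian) (τ : ℝ) (hτ : 0 < τ)
    (C : ℝ) (hC : 0 ≤ C)
    (hbound : ∀ v : Fin n → ℂ, euclNorm ((A - Ahat).mulVec v) ≤ C * euclNorm v)
    (b : ℕ → Fin n → ℂ) (u x : ℕ → Fin n → ℂ)
    (hu : ∀ k : ℕ, (Complex.I / (τ : ℂ)) • (u (k + 1) - u k) =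
      Ahat.mulVec ((2 : ℂ)⁻¹ • (u (k + 1) + u k)) + b k)
    (hx : ∀ k : ℕ, x (k + 1) =
      ((1 + (Complex.I * ((τ : ℂ) / 2)) • A)⁻¹ *
          (1 - (Complex.I * ((τ : ℂ) / 2)) • A)).mulVec (x k))
    (h0 : x 0 = u 0) :
    ∀ k : ℕ, 1 ≤ k → euclNorm (u k - x k) ≤
      τ * ((∑ j ∈ Finset.range k, euclNorm (b j)) + (k : ℝ) * C * euclNorm (u 0)) :=
  cnDMD_prediction_error_bound_general n A Ahat hA hAhat τ hτ C hbound b u x hu hx h0
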